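/- arXiv:0709.1466 — 4 statements merged into one kernel-verified Lean document; each statement's English description precedes it below -/
import Mathlib

section
/- Let n ≥ 2 be an integer and let f : ℝ → ℝ be the continuous function equal to 1 on [1/n, 1 - 1/n], equal to -1 on [-1 + 1/n, -1/n], equal to 0 for |t| ≥ 1, and linear on each of the intervals [-1, -1+1/n], [-1/n, 1/n], [1-1/n, 1]. Then there is an absolute constant c > 0 such that for all sufficiently large n, |2 ∫₀¹ sin(f(t))/t dt| ≥ c · log n. -/
open Real MeasureTheory

theorem stmt0 :
    ∃ c : ℝ, 0 < c ∧ ∃ N : ℕ, 2 ≤ N ∧ ∀ n : ℕ, N ≤ n →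
      ∀ f : ℝ → ℝ,
        (∀ t : ℝ, f t = max (-1) (min 1 ((n : ℝ) * t)) * max 0 (min 1 ((n : ℝ) * (1 - |t|)))) →
        c * Real.log n ≤ |2 * ∫ t in (0:ℝ)..1, Real.sin (f t) / t| := by
  have hsin : 0 < Real.sin 1 :=
    Real.sin_pos_of_pos_of_lt_pi one_pos (by linarith [Real.pi_gt_three])
  refine ⟨Real.sin 1, hsin, 3, by norm_num, ?_⟩
  intro n hn f hf
  have hn3 : (3:ℝ) ≤ (n:ℝ) := by exact_mod_cast hn
  have hnpos : (0:ℝ) < n := by linarith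
  set a : ℝ := (n:ℝ)⁻¹ with ha
  set b : ℝ := 1 - (n:ℝ)⁻¹ with hb
  have h13 : a ≤ 1/3 := by
    rw [ha, inv_le_comm₀ (by linarith) (by norm_num)]
    linarith
  have hapos : 0 < a := by rw [ha]; positivity
  have hab : a ≤ b := by rw [hb, ha]; linarith
  have hb1 : b ≤ 1 := by
    rw [hb]
    have : (0:ℝ) < (n:ℝ)⁻¹ := by positivity
    linarith
  have hna : (n:ℝ) * a = 1 := by rw [ha]; field_simp
  -- pointwise formula on [0,1]
  have hfval : ∀ t ∈ Set.Icc (0:ℝ) 1, f t = min 1 ((n:ℝ)*t) * min 1 ((n:ℝ)*(1-t)) := by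
    intro t ht
    rw [hf t, abs_of_nonneg ht.1]
    rw [max_eq_right, max_eq_right]
    · exact le_min zero_le_one (by nlinarith [ht.2])
    · exact le_min (by norm_num) (by nlinarith [ht.1])
  have hf01 : ∀ t ∈ Set.Icc (0:ℝ) 1, 0 ≤ f t ∧ f t ≤ 1 ∧ f t ≤ (n:ℝ)*t := by
    intro t ht
    rw [hfval t ht]
    have h1 : 0 ≤ min 1 ((n:ℝ)*t) := le_min zero_le_one (by nlinarith [ht.1])
    have h2 : 0 ≤ min 1 ((n:ℝ)*(1-t)) := le_min zero_le_one (by nlinarith [ht.2])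
    refine ⟨mul_nonneg h1 h2, mul_le_one₀ (min_le_left _ _) h2 (min_le_left _ _), ?_⟩
    calc min 1 ((n:ℝ)*t) * min 1 ((n:ℝ)*(1-t))
        ≤ min 1 ((n:ℝ)*t) := mul_le_of_le_one_right h1 (min_le_left _ _)
      _ ≤ (n:ℝ)*t := min_le_right _ _
  have hfone : ∀ t ∈ Set.Icc a b, f t = 1 := by
    intro t ht
    have ht01 : t ∈ Set.Icc (0:ℝ) 1 := ⟨le_trans hapos.le ht.1, le_trans ht.2 hb1⟩
    rw [hfval t ht01]
    have h1 : (1:ℝ) ≤ (n:ℝ)*t := by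
      calc (1:ℝ) = (n:ℝ)*a := hna.symm
        _ ≤ (n:ℝ)*t := by nlinarith [ht.1]
    have h2 : (1:ℝ) ≤ (n:ℝ)*(1-t) := by
      have : a ≤ 1 - t := by rw [hb] at ht; linarith [ht.2]
      calc (1:ℝ) = (n:ℝ)*a := hna.symm
        _ ≤ (n:ℝ)*(1-t) := by nlinarith
    rw [min_eq_left h1, min_eq_left h2, one_mul]
  -- sin bounds
  have hsinb : ∀ t ∈ Set.Icc (0:ℝ) 1, 0 ≤ Real.sin (f t) ∧ Real.sin (f t) ≤ (n:ℝ)*t := by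
    intro t ht
    obtain ⟨h0, h1, h2⟩ := hf01 t ht
    refine ⟨Real.sin_nonneg_of_nonneg_of_le_pi h0 (by linarith [Real.pi_gt_three]), ?_⟩
    calc Real.sin (f t) ≤ f t := Real.sin_le h0
      _ ≤ (n:ℝ)*t := h2
  have hgnonneg : ∀ t ∈ Set.Icc (0:ℝ) 1, 0 ≤ Real.sin (f t) / t := by
    intro t ht
    exact div_nonneg (hsinb t ht).1 ht.1
  -- continuity of f
  have hfc : Continuous f := by
    have : f = fun t => max (-1) (min 1 ((n : ℝ) * t)) * max 0 (min 1 ((n : ℝ) * (1 - |t|))) :=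
      funext hf
    rw [this]
    exact (continuous_const.max (continuous_const.min (continuous_const.mul continuous_id))).mul
      (continuous_const.max (continuous_const.min (continuous_const.mul
        (continuous_const.sub continuous_abs))))
  -- integrability on [0,1]
  have hint : IntervalIntegrable (fun t => Real.sin (f t) / t) volume 0 1 := by
    rw [intervalIntegrable_iff_integrableOn_Ioc_of_le zero_le_one]
    apply Measure.integrableOn_of_bounded (M := (n:ℝ))
    · simp [Real.volume_Ioc]
    · exact ((Real.continuous_sin.comp hfc).measurable.div measurable_id).aestronglyMeasurable
    · rw [ae_restrict_iff' measurableSet_Ioc]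
      filter_upwards with t ht
      have ht01 : t ∈ Set.Icc (0:ℝ) 1 := ⟨ht.1.le, ht.2⟩
      rw [Real.norm_eq_abs, abs_of_nonneg (hgnonneg t ht01)]
      rw [div_le_iff₀ ht.1]
      exact (hsinb t ht01).2
  have hintab : ∀ c d : ℝ, 0 ≤ c → c ≤ d → d ≤ 1 →
      IntervalIntegrable (fun t => Real.sin (f t) / t) volume c d := by
    intro c d hc hcd hd
    apply hint.mono_set
    rw [Set.uIcc_of_le zero_le_one, Set.uIcc_of_le hcd]
    intro x hx
    exact ⟨le_trans hc hx.1, le_trans hx.2 hd⟩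
  -- split the integral
  have hsplit : (∫ t in (0:ℝ)..1, Real.sin (f t) / t) =
      (∫ t in (0:ℝ)..a, Real.sin (f t) / t) + (∫ t in a..b, Real.sin (f t) / t) +
      (∫ t in b..1, Real.sin (f t) / t) := by
    rw [intervalIntegral.integral_add_adjacent_intervals (hintab 0 a le_rfl hapos.le (by linarith))
      (hintab a b hapos.le hab hb1),
      intervalIntegral.integral_add_adjacent_intervals
      ((hintab 0 a le_rfl hapos.le (by linarith)).trans (hintab a b hapos.le hab hb1))
      (hintab b 1 (by linarith) hb1 le_rfl)]
  -- middle integral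
  have hmid : (∫ t in a..b, Real.sin (f t) / t) = Real.sin 1 * Real.log ((n:ℝ) - 1) := by
    have : (∫ t in a..b, Real.sin (f t) / t) = ∫ t in a..b, Real.sin 1 * (1/t) := by
      apply intervalIntegral.integral_congr
      intro t ht
      rw [Set.uIcc_of_le hab] at ht
      show Real.sin (f t) / t = Real.sin 1 * (1 / t)
      rw [hfone t ht]
      ring
    rw [this, intervalIntegral.integral_const_mul, integral_one_div, hb, ha]
    · congr 1
      field_simp
    · intro h
      rw [Set.uIcc_of_le hab] at h
      exact absurd h.1 (by simp [ha]; positivity)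
  -- edges nonneg
  have hleft : 0 ≤ ∫ t in (0:ℝ)..a, Real.sin (f t) / t := by
    apply intervalIntegral.integral_nonneg hapos.le
    intro t ht
    exact hgnonneg t ⟨ht.1, le_trans ht.2 (by linarith)⟩
  have hright : 0 ≤ ∫ t in b..1, Real.sin (f t) / t := by
    apply intervalIntegral.integral_nonneg hb1
    intro t ht
    exact hgnonneg t ⟨le_trans (by linarith : (0:ℝ) ≤ b) ht.1, ht.2⟩
  have hlogpos : 0 ≤ Real.log ((n:ℝ) - 1) :=
    Real.log_nonneg (by linarith)
  have hInonneg : 0 ≤ ∫ t in (0:ℝ)..1, Real.sin (f t) / t := by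
    rw [hsplit]
    have := mul_nonneg hsin.le hlogpos
    linarith [hmid ▸ this]
  rw [abs_of_nonneg (by linarith)]
  have hloglog : Real.log (n:ℝ) ≤ 2 * Real.log ((n:ℝ) - 1) := by
    have := Real.log_le_log hnpos (by nlinarith : (n:ℝ) ≤ ((n:ℝ)-1)^2)
    rw [Real.log_pow] at this
    push_cast at this
    linarith
  have : Real.sin 1 * Real.log ((n:ℝ) - 1) ≤ ∫ t in a..b, Real.sin (f t) / t := hmid.ge
  rw [hsplit]
  nlinarith [mul_le_mul_of_nonneg_left hloglog hsin.le]
end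

section
/- Let n, k ≥ 2 be integers, let f be the piecewise linear odd function equal to 1 on [1/n, 1-1/n], -1 on [-1+1/n, -1/n], 0 for |t|≥1, and linear in between. Let φ_k(x) = c_k (1 - x²/4)^{k²} with ∫_{-2}^2 φ_k = 1, and define P_k(t) = ∫_{-1}^1 f(x) φ_k(t-x) dx. Then P_k is a polynomial of degree exactly 2k² - 1 with leading coefficient a_k = (-1)^{k²+1} · (2 c_k k² / 4^{k²}) · (1 - 1/n). -/
open Real MeasureTheory Polynomial intervalIntegral

lemma integral_quad (c0 c1 c2 a b : ℝ) :
    (∫ x in a..b, (c0 + c1 * x + c2 * x ^ 2)) =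
      c0 * (b - a) + c1 * (b ^ 2 - a ^ 2) / 2 + c2 * (b ^ 3 - a ^ 3) / 3 := by
  have h1 : IntervalIntegrable (fun x : ℝ => c0 + c1 * x) volume a b :=
    (Continuous.intervalIntegrable (by continuity) _ _)
  have h2 : IntervalIntegrable (fun x : ℝ => c2 * x ^ 2) volume a b :=
    (Continuous.intervalIntegrable (by continuity) _ _)
  have h0 : IntervalIntegrable (fun x : ℝ => (c0 : ℝ)) volume a b :=
    (Continuous.intervalIntegrable (by continuity) _ _)
  have h1' : IntervalIntegrable (fun x : ℝ => c1 * x) volume a b :=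
    (Continuous.intervalIntegrable (by continuity) _ _)
  rw [intervalIntegral.integral_add h1 h2, intervalIntegral.integral_add h0 h1',
    intervalIntegral.integral_const, intervalIntegral.integral_const_mul,
    intervalIntegral.integral_const_mul, integral_id, integral_pow]
  push_cast
  simp [smul_eq_mul]
  ring

set_option maxHeartbeats 2000000 in
lemma f_props (n : ℕ) (hn : 2 ≤ n) (f : ℝ → ℝ)
    (hf : ∀ t : ℝ, f t = max (-1) (min 1 ((n : ℝ) * t)) * max 0 (min 1 ((n : ℝ) * (1 - |t|)))) :
    Continuous f ∧ (∫ x in (-1:ℝ)..1, f x) = 0 ∧ (∫ x in (-1:ℝ)..1, f x * x) = 1 - 1 / n := by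
  have hfc : Continuous f := by
    rw [show f = _ from funext hf]
    apply Continuous.mul
    · exact continuous_const.max (continuous_const.min (continuous_const.mul continuous_id))
    · exact continuous_const.max (continuous_const.min
        (continuous_const.mul (continuous_const.sub continuous_abs)))
  set N : ℝ := (n : ℝ) with hNdef
  have hN : (2:ℝ) ≤ N := by rw [hNdef]; exact_mod_cast hn
  have hNpos : (0:ℝ) < N := by linarith
  have hN0 : N ≠ 0 := ne_of_gt hNpos
  have hNN : N * (1/N) = 1 := by field_simp
  have hinv : 1/N ≤ 1/2 := by
    rw [div_le_div_iff₀ hNpos (by norm_num)]; linarith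
  have hinvpos : 0 < 1/N := by positivity
  -- interval orderings
  have o1 : (-1:ℝ) ≤ -1 + 1/N := by linarith
  have o2 : (-1:ℝ) + 1/N ≤ -(1/N) := by linarith
  have o3 : -(1/N) ≤ (1/N:ℝ) := by linarith
  have o4 : (1/N:ℝ) ≤ 1 - 1/N := by linarith
  have o5 : (1:ℝ) - 1/N ≤ 1 := by linarith
  -- piecewise formulas
  have hA : ∀ t ∈ Set.Icc (-1:ℝ) (-1+1/N), f t = -N - N*t := by
    rintro t ⟨h1, h2⟩
    have m2 := mul_le_mul_of_nonneg_left h2 hNpos.le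
    have k1 : N * t ≤ -1 := by nlinarith
    have k2 : 0 ≤ N * (1 + t) := mul_nonneg hNpos.le (by linarith)
    have k3 : N * (1 + t) ≤ 1 := by nlinarith
    rw [hf, abs_of_nonpos (by linarith), min_eq_right (by linarith),
      max_eq_left k1, min_eq_right (by nlinarith), max_eq_right (by nlinarith)]
    ring
  have hB : ∀ t ∈ Set.Icc ((-1:ℝ)+1/N) (-(1/N)), f t = -1 := by
    rintro t ⟨h1, h2⟩
    have m1 := mul_le_mul_of_nonneg_left h1 hNpos.le
    have m2 := mul_le_mul_of_nonneg_left h2 hNpos.le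
    have k1 : N * t ≤ -1 := by nlinarith
    rw [hf, abs_of_nonpos (by linarith), min_eq_right (by linarith),
      max_eq_left k1, min_eq_left (by nlinarith), max_eq_right (by norm_num)]
    ring
  have hC : ∀ t ∈ Set.Icc (-(1/N)) ((1/N:ℝ)), f t = N*t := by
    rintro t ⟨h1, h2⟩
    have habs : |t| ≤ 1/N := abs_le.mpr ⟨by linarith, h2⟩
    have mabs := mul_le_mul_of_nonneg_left habs hNpos.le
    have m1 := mul_le_mul_of_nonneg_left h1 hNpos.le
    have m2 := mul_le_mul_of_nonneg_left h2 hNpos.le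
    have k1 : N * t ≤ 1 := by nlinarith
    have k2 : -1 ≤ N * t := by nlinarith
    have k3 : 1 ≤ N * (1 - |t|) := by nlinarith
    rw [hf, min_eq_right k1, max_eq_right k2, min_eq_left k3, max_eq_right (by linarith)]
    ring
  have hD : ∀ t ∈ Set.Icc ((1/N:ℝ)) (1-1/N), f t = 1 := by
    rintro t ⟨h1, h2⟩
    have m1 := mul_le_mul_of_nonneg_left h1 hNpos.le
    have m2 := mul_le_mul_of_nonneg_left h2 hNpos.le
    have k1 : 1 ≤ N * t := by nlinarith
    rw [hf, abs_of_nonneg (by linarith), min_eq_left k1, max_eq_right (by linarith),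
      min_eq_left (by nlinarith), max_eq_right (by norm_num)]
    ring
  have hE : ∀ t ∈ Set.Icc ((1:ℝ)-1/N) 1, f t = N - N*t := by
    rintro t ⟨h1, h2⟩
    have m1 := mul_le_mul_of_nonneg_left h1 hNpos.le
    have k1 : 1 ≤ N * t := by nlinarith
    rw [hf, abs_of_nonneg (by linarith), min_eq_left k1, max_eq_right (by linarith),
      min_eq_right (by nlinarith), max_eq_right (mul_nonneg hNpos.le (by linarith))]
    ring
  -- splitting lemma
  have split : ∀ g : ℝ → ℝ, Continuous g →
      (∫ x in (-1:ℝ)..1, g x) =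
        (∫ x in (-1:ℝ)..(-1+1/N), g x) +
        ((∫ x in ((-1:ℝ)+1/N)..(-(1/N)), g x) +
        ((∫ x in (-(1/N))..((1/N:ℝ)), g x) +
        ((∫ x in ((1/N:ℝ))..(1-1/N), g x) + (∫ x in ((1:ℝ)-1/N)..1, g x)))) := by
    intro g hg
    have I : ∀ a b : ℝ, IntervalIntegrable g volume a b := fun a b => hg.intervalIntegrable a b
    rw [← integral_add_adjacent_intervals (I (-1) (-1+1/N)) (I (-1+1/N) 1),
        ← integral_add_adjacent_intervals (I (-1+1/N) (-(1/N))) (I (-(1/N)) 1),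
        ← integral_add_adjacent_intervals (I (-(1/N)) (1/N)) (I (1/N) 1),
        ← integral_add_adjacent_intervals (I (1/N) (1-1/N)) (I (1-1/N) 1)]
  refine ⟨hfc, ?_, ?_⟩
  · -- ∫ f = 0
    rw [split f hfc]
    rw [integral_congr (g := fun t => (-N) + (-N)*t + 0*t^2)
        (fun t ht => by rw [Set.uIcc_of_le o1] at ht; rw [hA t ht]; ring),
      integral_congr (a := (-1:ℝ)+1/N) (b := -(1/N)) (g := fun t => (-1) + 0*t + 0*t^2)
        (fun t ht => by rw [Set.uIcc_of_le o2] at ht; rw [hB t ht]; ring),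
      integral_congr (a := -(1/N)) (b := (1/N:ℝ)) (g := fun t => 0 + N*t + 0*t^2)
        (fun t ht => by rw [Set.uIcc_of_le o3] at ht; rw [hC t ht]; ring),
      integral_congr (a := (1/N:ℝ)) (b := 1-1/N) (g := fun t => 1 + 0*t + 0*t^2)
        (fun t ht => by rw [Set.uIcc_of_le o4] at ht; rw [hD t ht]; ring),
      integral_congr (a := (1:ℝ)-1/N) (b := 1) (g := fun t => N + (-N)*t + 0*t^2)
        (fun t ht => by rw [Set.uIcc_of_le o5] at ht; rw [hE t ht]; ring),
      integral_quad, integral_quad, integral_quad, integral_quad, integral_quad]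
    field_simp
    ring
  · -- ∫ f x * x = 1 - 1/n
    have hgc : Continuous (fun x => f x * x) := hfc.mul continuous_id
    rw [show (∫ x in (-1:ℝ)..1, f x * x) = ∫ x in (-1:ℝ)..1, (fun x => f x * x) x from rfl]
    rw [split _ hgc]
    rw [integral_congr (g := fun t => 0 + (-N)*t + (-N)*t^2)
        (fun t ht => by rw [Set.uIcc_of_le o1] at ht; simp only; rw [hA t ht]; ring),
      integral_congr (a := (-1:ℝ)+1/N) (b := -(1/N)) (g := fun t => 0 + (-1)*t + 0*t^2)
        (fun t ht => by rw [Set.uIcc_of_le o2] at ht; simp only; rw [hB t ht]; ring),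
      integral_congr (a := -(1/N)) (b := (1/N:ℝ)) (g := fun t => 0 + 0*t + N*t^2)
        (fun t ht => by rw [Set.uIcc_of_le o3] at ht; simp only; rw [hC t ht]; ring),
      integral_congr (a := (1/N:ℝ)) (b := 1-1/N) (g := fun t => 0 + 1*t + 0*t^2)
        (fun t ht => by rw [Set.uIcc_of_le o4] at ht; simp only; rw [hD t ht]; ring),
      integral_congr (a := (1:ℝ)-1/N) (b := 1) (g := fun t => 0 + N*t + (-N)*t^2)
        (fun t ht => by rw [Set.uIcc_of_le o5] at ht; simp only; rw [hE t ht]; ring),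
      integral_quad, integral_quad, integral_quad, integral_quad, integral_quad]
    rw [hNdef] at *
    field_simp
    ring

lemma coeff_top (ck : ℝ) (m : ℕ) (hm : 1 ≤ m) (j : ℕ) (hj : 2*m - 1 ≤ j) :
    (C (C ck) * (1 - C (C (4⁻¹:ℝ)) * (X - C X) ^ 2) ^ m).coeff j
      = C ck * ((-C (4⁻¹:ℝ)) ^ m * (((X - C X : Polynomial (Polynomial ℝ)) ^ (2*m)).coeff j)) := by
  rw [coeff_C_mul]
  congr 1
  have hq : (1 - C (C (4⁻¹:ℝ)) * (X - C X) ^ 2 : Polynomial (Polynomial ℝ))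
      = (-(C (C (4⁻¹:ℝ))) * (X - C X) ^ 2) + 1 := by ring
  rw [hq, add_pow, finset_sum_coeff, Finset.sum_eq_single m]
  · simp only [Nat.choose_self, Nat.cast_one, mul_one, one_pow]
    rw [mul_pow, ← pow_mul, ← C_neg, ← C_pow, coeff_C_mul]
  · intro i hi hne
    apply coeff_eq_zero_of_natDegree_lt
    have h1 : (-(C (C (4⁻¹:ℝ))) * (X - C X) ^ 2).natDegree ≤ 2 := by
      refine le_trans (natDegree_mul_le) ?_
      simp only [natDegree_neg, natDegree_C, zero_add]
      exact le_trans (natDegree_pow_le) (by simp [natDegree_X_sub_C])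
    have h2 : ((-(C (C (4⁻¹:ℝ))) * (X - C X) ^ 2) ^ i * 1 ^ (m - i) *
        ((m.choose i : ℕ) : Polynomial (Polynomial ℝ))).natDegree ≤ 2 * i := by
      refine le_trans natDegree_mul_le ?_
      rw [natDegree_natCast, add_zero, one_pow, mul_one]
      exact le_trans natDegree_pow_le (by nlinarith)
    have hilt : i ≤ m - 1 := by
      have := Finset.mem_range.mp hi; omega
    omega
  · intro h
    exact absurd (Finset.self_mem_range_succ m) h

lemma coeff_u_top (m : ℕ) :
    (((X - C X : Polynomial (Polynomial ℝ))) ^ (2*m)).coeff (2*m) = 1 := by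
  rw [sub_eq_add_neg, ← C_neg, coeff_X_add_C_pow]
  simp

lemma coeff_u_sub (m : ℕ) (hm : 1 ≤ m) :
    (((X - C X : Polynomial (Polynomial ℝ))) ^ (2*m)).coeff (2*m - 1)
      = -X * ((2*m : ℕ) : Polynomial ℝ) := by
  rw [sub_eq_add_neg, ← C_neg, coeff_X_add_C_pow]
  rw [show 2*m - (2*m - 1) = 1 by omega]
  rw [show (2*m).choose (2*m-1) = 2*m by
    have h := Nat.choose_symm (n := 2*m) (k := 1) (by omega)
    rw [Nat.choose_one_right] at h
    exact h]
  simp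

lemma pol_deg (ck : ℝ) (m : ℕ) :
    (C (C ck) * (1 - C (C (4⁻¹:ℝ)) * (X - C X) ^ 2) ^ m).natDegree ≤ 2*m := by
  refine le_trans natDegree_mul_le ?_
  rw [natDegree_C, zero_add]
  refine le_trans natDegree_pow_le ?_
  have : (1 - C (C (4⁻¹:ℝ)) * (X - C X) ^ 2).natDegree ≤ 2 := by
    refine le_trans (natDegree_sub_le _ _) ?_
    simp only [natDegree_one, max_le_iff]
    refine ⟨by omega, le_trans natDegree_mul_le ?_⟩
    simp only [natDegree_C, zero_add]
    exact le_trans natDegree_pow_le (by simp [natDegree_X_sub_C])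
  nlinarith

lemma eval_sum_id (ck : ℝ) (m : ℕ) (x t : ℝ) :
    ck * (1 - (t - x) ^ 2 / 4) ^ m
      = ∑ i ∈ Finset.range (2*m+1),
          (((C (C ck) * (1 - C (C (4⁻¹:ℝ)) * (X - C X) ^ 2) ^ m).coeff i).eval x) * t ^ i := by
  set pol : Polynomial (Polynomial ℝ) := C (C ck) * (1 - C (C (4⁻¹:ℝ)) * (X - C X) ^ 2) ^ m with hpol
  have hdeg : (pol.map (evalRingHom x)).natDegree < 2*m+1 :=
    lt_of_le_of_lt (le_trans (natDegree_map_le) (pol_deg ck m)) (by omega)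
  have := Polynomial.eval_eq_sum_range' hdeg t
  simp only [coeff_map, coe_evalRingHom] at this
  rw [← this]
  simp only [hpol, Polynomial.map_mul, Polynomial.map_pow, Polynomial.map_sub,
    Polynomial.map_one, map_C, coe_evalRingHom, eval_C, Polynomial.map_mul]
  simp only [eval_mul, eval_pow, eval_sub, eval_one, eval_C, Polynomial.map_sub,
    Polynomial.map_pow, Polynomial.map_X, eval_X, coe_evalRingHom]
  ring

set_option maxHeartbeats 2000000 in
theorem stmt3 (n k : ℕ) (hn : 2 ≤ n) (hk : 2 ≤ k)
    (f : ℝ → ℝ)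
    (hf : ∀ t : ℝ, f t = max (-1) (min 1 ((n : ℝ) * t)) * max 0 (min 1 ((n : ℝ) * (1 - |t|))))
    (ck : ℝ)
    (hck : (∫ x in (-2:ℝ)..2, ck * (1 - x ^ 2 / 4) ^ (k ^ 2)) = 1)
    (P : ℝ → ℝ)
    (hP : ∀ t : ℝ, P t = ∫ x in (-1:ℝ)..1, f x * (ck * (1 - (t - x) ^ 2 / 4) ^ (k ^ 2))) :
    ∃ Q : Polynomial ℝ, (∀ t : ℝ, Q.eval t = P t) ∧
      Q.natDegree = 2 * k ^ 2 - 1 ∧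
      Q.leadingCoeff = (-1) ^ (k ^ 2 + 1) * (2 * ck * (k : ℝ) ^ 2 / 4 ^ (k ^ 2)) * (1 - 1 / (n : ℝ)) := by
  obtain ⟨hfc, hI0, hI1⟩ := f_props n hn f hf
  set m := k ^ 2 with hmdef
  have hm1 : 1 ≤ m := Nat.one_le_pow 2 k (by omega)
  have ck0 : ck ≠ 0 := by
    intro h; rw [h] at hck; simp at hck
  set pol : Polynomial (Polynomial ℝ) :=
    C (C ck) * (1 - C (C (4⁻¹:ℝ)) * (X - C X) ^ 2) ^ m with hpol
  set aj : ℕ → ℝ := fun j => ∫ x in (-1:ℝ)..1, f x * (pol.coeff j).eval x with haj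
  -- coefficient values
  have hc2m : (pol.coeff (2*m)) = C (ck * (-4⁻¹:ℝ)^m) := by
    rw [hpol, coeff_top ck m hm1 (2*m) (by omega), coeff_u_top, mul_one, ← C_neg, ← C_pow, ← C_mul]
  have hc2m1 : (pol.coeff (2*m-1)) = C (ck * (-4⁻¹:ℝ)^m) * (-X * ((2*m : ℕ) : Polynomial ℝ)) := by
    rw [hpol, coeff_top ck m hm1 (2*m-1) (le_refl _), coeff_u_sub m hm1, ← C_neg, ← C_pow,
      ← mul_assoc, ← C_mul]
  have ha2m : aj (2*m) = 0 := by
    simp only [haj, hc2m, eval_C]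
    rw [intervalIntegral.integral_mul_const, hI0, zero_mul]
  have ha2m1 : aj (2*m-1) = (1 - 1/(n:ℝ)) * (ck * (-4⁻¹:ℝ)^m * (-(2*(m:ℝ)))) := by
    have heval : ∀ x : ℝ, (pol.coeff (2*m-1)).eval x
        = ck * (-4⁻¹:ℝ)^m * (-(2*(m:ℝ))) * x := by
      intro x
      rw [hc2m1]
      simp only [eval_mul, eval_C, eval_neg, eval_X, eval_natCast]
      push_cast
      ring
    simp only [haj]
    rw [intervalIntegral.integral_congr
        (g := fun x => (f x * x) * (ck * (-4⁻¹:ℝ)^m * (-(2*(m:ℝ)))))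
        (fun x _ => by simp only; rw [heval x]; ring)]
    rw [intervalIntegral.integral_mul_const, hI1]
  have hn2 : (2:ℝ) ≤ (n:ℝ) := by exact_mod_cast hn
  have h1n : (0:ℝ) < 1 - 1/(n:ℝ) := by
    have : (1:ℝ)/(n:ℝ) < 1 := by rw [div_lt_one (by linarith)]; linarith
    linarith
  have hne : aj (2*m-1) ≠ 0 := by
    rw [ha2m1]
    refine mul_ne_zero (ne_of_gt h1n) (mul_ne_zero (mul_ne_zero ck0 (pow_ne_zero _ (by norm_num))) ?_)
    have : (0:ℝ) < (m:ℝ) := by exact_mod_cast hm1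
    intro h
    nlinarith [h]
  -- the polynomial
  refine ⟨∑ i ∈ Finset.range (2*m+1), C (aj i) * X ^ i, ?_, ?_, ?_⟩
  · -- evaluation
    intro t
    have hQeval : (∑ i ∈ Finset.range (2*m+1), C (aj i) * X ^ i : Polynomial ℝ).eval t
        = ∑ i ∈ Finset.range (2*m+1), aj i * t ^ i := by
      rw [Polynomial.eval_finset_sum]
      simp
    rw [hQeval, hP t]
    have hint : ∀ i ∈ Finset.range (2*m+1),
        IntervalIntegrable (fun x => f x * (pol.coeff i).eval x * t ^ i) volume (-1:ℝ) 1 :=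
      fun i _ => ((hfc.mul (Polynomial.continuous _)).mul continuous_const).intervalIntegrable _ _
    rw [show (∫ x in (-1:ℝ)..1, f x * (ck * (1 - (t - x) ^ 2 / 4) ^ m))
        = ∫ x in (-1:ℝ)..1, ∑ i ∈ Finset.range (2*m+1), f x * (pol.coeff i).eval x * t ^ i by
      refine intervalIntegral.integral_congr fun x _ => ?_
      have hs := eval_sum_id ck m x t
      rw [← hpol] at hs
      rw [hs, Finset.mul_sum]
      exact Finset.sum_congr rfl fun i _ => by ring]
    rw [intervalIntegral.integral_finset_sum hint]
    refine (Finset.sum_congr rfl fun i _ => ?_).symm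
    rw [intervalIntegral.integral_mul_const]
  · -- natDegree
    have hQc : ∀ j, (∑ i ∈ Finset.range (2*m+1), C (aj i) * X ^ i : Polynomial ℝ).coeff j
        = if j < 2*m+1 then aj j else 0 := by
      intro j
      rw [finset_sum_coeff]
      simp only [coeff_C_mul, coeff_X_pow, mul_ite, mul_one, mul_zero]
      rw [Finset.sum_ite_eq (Finset.range (2*m+1)) j aj]
      simp [Finset.mem_range]
    apply le_antisymm
    · rw [Polynomial.natDegree_le_iff_coeff_eq_zero]
      intro j hj
      rw [hQc j]
      split_ifs with h
      · have : j = 2*m := by omega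
        rw [this, ha2m]
      · rfl
    · apply Polynomial.le_natDegree_of_ne_zero
      rw [hQc, if_pos (by omega)]
      exact hne
  · -- leadingCoeff
    have hQc : ∀ j, (∑ i ∈ Finset.range (2*m+1), C (aj i) * X ^ i : Polynomial ℝ).coeff j
        = if j < 2*m+1 then aj j else 0 := by
      intro j
      rw [finset_sum_coeff]
      simp only [coeff_C_mul, coeff_X_pow, mul_ite, mul_one, mul_zero]
      rw [Finset.sum_ite_eq (Finset.range (2*m+1)) j aj]
      simp [Finset.mem_range]
    have hdQ : (∑ i ∈ Finset.range (2*m+1), C (aj i) * X ^ i : Polynomial ℝ).natDegree = 2*m-1 := by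
      apply le_antisymm
      · rw [Polynomial.natDegree_le_iff_coeff_eq_zero]
        intro j hj
        rw [hQc j]
        split_ifs with h
        · have : j = 2*m := by omega
          rw [this, ha2m]
        · rfl
      · apply Polynomial.le_natDegree_of_ne_zero
        rw [hQc, if_pos (by omega)]
        exact hne
    rw [Polynomial.leadingCoeff, hdQ, hQc, if_pos (by omega), ha2m1]
    have hmcast : ((m:ℕ):ℝ) = (k:ℝ)^2 := by rw [hmdef]; push_cast; ring
    rw [← hmcast]
    rw [show ((-4⁻¹):ℝ)^m = (-1)^m/4^m by
      rw [show ((-4⁻¹):ℝ) = (-1)/4 by norm_num, div_pow], pow_succ]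
    have h4 : (4:ℝ)^m ≠ 0 := by positivity
    field_simp
end

section
/- Let n ≥ 2, f the piecewise linear function above, A(x,t) = |f(t+x)+f(t-x)-2f(t)|, and φ_n(x) = c_n(1-x²/4)^{n²} with ∫_{-2}^2 φ_n = 1. Then ∫₀² ∫₀¹ (A(x,t)/t) dt φ_n(x) dx = o(log n) as n → ∞, i.e. the ratio of this double integral to log n tends to 0. -/
open Real MeasureTheory Filter

/-!
The second difference `A(x,t)` is at most `4` since `|f| ≤ 1`, at most `8nt` since `f` is odd and
`2n`-Lipschitz, and vanishes for `x + 1/n < t ≤ 1/2` where `f = 1` on `[t - x, t + x]`. Splitting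
at `t = 1/(2n)` gives `∫₀¹ A(x,t)/t dt ≤ 8nx + 20`. Bernoulli's inequality gives `c_n ≤ 2n`, and
`∫₀² x (1 - x²/4)^(n²) dx = 2/(n² + 1)`, so the double integral is bounded by an absolute constant,
which is `o(log n)`.
-/

open Set intervalIntegral

lemma abs_mul_sub_mul_le {p q p' q' : ℝ} (hq : |q| ≤ 1) (hp' : |p'| ≤ 1) :
    |p * q - p' * q'| ≤ |p - p'| + |q - q'| :=
  calc |p * q - p' * q'| = |(p - p') * q + p' * (q - q')| := by ring_nf
    _ ≤ |p - p'| * |q| + |p'| * |q - q'| := by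
        rw [← abs_mul, ← abs_mul]; exact abs_add_le _ _
    _ ≤ |p - p'| * 1 + 1 * |q - q'| := by gcongr
    _ = |p - p'| + |q - q'| := by ring

lemma abs_clamp_le_one {c : ℝ} (hc : c ∈ Icc (-1) 1) (u : ℝ) : |max c (min 1 u)| ≤ 1 :=
  abs_le.2 ⟨hc.1.trans (le_max_left _ _), max_le hc.2 (min_le_left _ _)⟩

lemma abs_clamp_sub_clamp_le (c u v : ℝ) :
    |max c (min 1 u) - max c (min 1 v)| ≤ |u - v| := by
  simpa [Real.dist_eq] using ((LipschitzWith.id.const_min 1).const_max c).dist_le_mul u v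

section SecondDifference

def secondDiff (g : ℝ → ℝ) (x t : ℝ) : ℝ := g (t + x) + g (t - x) - 2 * g t

variable {g : ℝ → ℝ}

lemma abs_secondDiff_le_of_abs_le {M : ℝ} (hg : ∀ t, |g t| ≤ M) (x t : ℝ) :
    |secondDiff g x t| ≤ 4 * M := by
  have h₁ := abs_le.1 (hg (t + x))
  have h₂ := abs_le.1 (hg (t - x))
  have h₃ := abs_le.1 (hg t)
  rw [secondDiff, abs_le]
  constructor <;> linarith

/-- An odd function vanishes at `0`, so the second difference at `t` is a sum of increments of
length `|t|`. -/
lemma abs_secondDiff_le_of_odd {K : ℝ} (hg : ∀ a b, |g a - g b| ≤ K * |a - b|)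
    (hodd : ∀ t, g (-t) = -g t) (x t : ℝ) : |secondDiff g x t| ≤ 4 * K * |t| := by
  have hg0 : g 0 = 0 := by linarith [hodd 0, neg_zero (G := ℝ) ▸ hodd 0]
  have h₁ := hg (t + x) x
  have h₂ := hg (t - x) (-x)
  have h₃ := hg t 0
  rw [add_sub_cancel_right] at h₁
  rw [sub_neg_eq_add, sub_add_cancel] at h₂
  rw [sub_zero, hg0, sub_zero] at h₃
  calc |secondDiff g x t| = |(g (t + x) - g x) + (g (t - x) - g (-x)) - 2 * g t| := by
        rw [secondDiff, hodd]; ring_nf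
    _ ≤ |g (t + x) - g x| + |g (t - x) - g (-x)| + 2 * |g t| := by
        refine (abs_sub _ _).trans ?_
        rw [abs_mul, abs_two]
        gcongr
        exact abs_add_le _ _
    _ ≤ 4 * K * |t| := by linarith

end SecondDifference

noncomputable def oddTrapezoid (n : ℕ) (t : ℝ) : ℝ :=
  max (-1) (min 1 ((n : ℝ) * t)) * max 0 (min 1 ((n : ℝ) * (1 - |t|)))

namespace oddTrapezoid

variable (n : ℕ)

lemma continuous : Continuous (oddTrapezoid n) := by
  unfold oddTrapezoid; fun_prop

lemma abs_le_one (t : ℝ) : |oddTrapezoid n t| ≤ 1 := by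
  rw [oddTrapezoid, abs_mul]
  exact mul_le_one₀ (abs_clamp_le_one (by norm_num) _) (abs_nonneg _)
    (abs_clamp_le_one (by norm_num) _)

lemma neg (t : ℝ) : oddTrapezoid n (-t) = -oddTrapezoid n t := by
  have hclamp : ∀ u : ℝ, max (-1) (min 1 (-u)) = -max (-1) (min 1 u) := by
    intro u
    simp only [max_def, min_def]
    split_ifs <;> linarith
  rw [oddTrapezoid, oddTrapezoid, abs_neg, mul_neg, hclamp, neg_mul]

lemma abs_sub_le (a b : ℝ) : |oddTrapezoid n a - oddTrapezoid n b| ≤ 2 * n * |a - b| := by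
  refine (abs_mul_sub_mul_le (abs_clamp_le_one (by norm_num) _)
    (abs_clamp_le_one (by norm_num) _)).trans ?_
  have h₁ := abs_clamp_sub_clamp_le (-1) (n * a) (n * b)
  have h₂ := abs_clamp_sub_clamp_le 0 (n * (1 - |a|)) (n * (1 - |b|))
  have h₃ := abs_abs_sub_abs_le_abs_sub b a
  rw [← mul_sub, abs_mul, Nat.abs_cast] at h₁ h₂
  rw [abs_sub_comm b a] at h₃
  rw [show 1 - |a| - (1 - |b|) = |b| - |a| by ring] at h₂
  nlinarith [Nat.cast_nonneg (α := ℝ) n]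

lemma eq_one {t : ℝ} (h₁ : 1 ≤ n * t) (h₂ : 1 ≤ n * (1 - t)) : oddTrapezoid n t = 1 := by
  have ht : 0 ≤ t := by nlinarith [Nat.cast_nonneg (α := ℝ) n]
  rw [oddTrapezoid, abs_of_nonneg ht, min_eq_left h₁, min_eq_left h₂]
  norm_num

end oddTrapezoid

lemma abs_secondDiff_oddTrapezoid_div_le (n : ℕ) (x : ℝ) {t : ℝ} (ht : 0 ≤ t) :
    |secondDiff (oddTrapezoid n) x t| / t ≤ 8 * n := by
  refine div_le_of_le_mul₀ ht (by positivity) ?_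
  have := abs_secondDiff_le_of_odd (oddTrapezoid.abs_sub_le n) (oddTrapezoid.neg n) x t
  rw [abs_of_nonneg ht] at this
  linarith

lemma secondDiff_oddTrapezoid_eq_zero {n : ℕ} {x t : ℝ} (hx : 0 ≤ x) (h₁ : 1 ≤ n * (t - x))
    (h₂ : 1 ≤ n * (1 - (t + x))) : secondDiff (oddTrapezoid n) x t = 0 := by
  have hn : (0 : ℝ) ≤ n := Nat.cast_nonneg n
  rw [secondDiff, oddTrapezoid.eq_one n (by nlinarith) h₂, oddTrapezoid.eq_one n h₁ (by nlinarith),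
    oddTrapezoid.eq_one n (by nlinarith) (by nlinarith)]
  norm_num

/-- The second difference vanishes for `x + 1/n < t ≤ 1/2`; below that range `4/t ≤ 4(x+1/n)/t²`,
above it `4/t < 8`. -/
lemma abs_secondDiff_oddTrapezoid_div_le_inv_sq {n : ℕ} (hn : 0 < n) {x t : ℝ} (hx : 0 ≤ x)
    (ht : 0 < t) : |secondDiff (oddTrapezoid n) x t| / t ≤ 4 * (x + 1 / n) / t ^ 2 + 8 := by
  have hn' : (0 : ℝ) < n := Nat.cast_pos.2 hn
  have hfour : |secondDiff (oddTrapezoid n) x t| / t ≤ 4 / t := by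
    gcongr
    simpa using abs_secondDiff_le_of_abs_le (oddTrapezoid.abs_le_one n) x t
  rcases le_or_gt t (x + 1 / n) with hsmall | hlarge
  · calc |secondDiff (oddTrapezoid n) x t| / t ≤ 4 / t := hfour
      _ = 4 * t / t ^ 2 := by field_simp
      _ ≤ 4 * (x + 1 / n) / t ^ 2 + 8 := by
          have : 4 * t / t ^ 2 ≤ 4 * (x + 1 / n) / t ^ 2 := by gcongr
          linarith
  rcases le_or_gt t (1 / 2) with hmid | hhalf
  · have hnt : 1 < n * (t - x) := (div_lt_iff₀' hn').1 (by linarith)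
    rw [secondDiff_oddTrapezoid_eq_zero hx hnt.le (by nlinarith), abs_zero, zero_div]
    positivity
  · calc |secondDiff (oddTrapezoid n) x t| / t ≤ 4 / t := hfour
      _ ≤ 8 := by rw [div_le_iff₀ ht]; linarith
      _ ≤ 4 * (x + 1 / n) / t ^ 2 + 8 := by
          have : 0 ≤ 4 * (x + 1 / n) / t ^ 2 := by positivity
          linarith

lemma intervalIntegrable_abs_secondDiff_oddTrapezoid_div (n : ℕ) (x : ℝ) {a b : ℝ} (ha : 0 ≤ a)
    (hab : a ≤ b) :
    IntervalIntegrable (fun t => |secondDiff (oddTrapezoid n) x t| / t) volume a b := by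
  have hcont : Continuous fun t => |secondDiff (oddTrapezoid n) x t| := by
    have := oddTrapezoid.continuous n
    unfold secondDiff; fun_prop
  refine IntervalIntegrable.mono_fun' (g := fun _ => 8 * (n : ℝ)) intervalIntegrable_const
    (hcont.measurable.div measurable_id).aestronglyMeasurable ?_
  rw [uIoc_of_le hab]
  refine (ae_restrict_iff' measurableSet_Ioc).2 (ae_of_all _ fun t ht => ?_)
  have ht0 : 0 ≤ t := ha.trans ht.1.le
  change ‖_‖ ≤ 8 * (n : ℝ)
  rw [Real.norm_eq_abs, abs_of_nonneg (by positivity)]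
  exact abs_secondDiff_oddTrapezoid_div_le n x ht0

lemma intervalIntegrable_div_sq_add_const {a b : ℝ} (ha : 0 < a) (hab : a ≤ b) (c d : ℝ) :
    IntervalIntegrable (fun t => c / t ^ 2 + d) volume a b := by
  refine ContinuousOn.intervalIntegrable
    ((continuousOn_const.div (continuousOn_pow 2) fun t ht => ?_).add continuousOn_const)
  exact pow_ne_zero 2 (ha.trans_le (uIcc_of_le hab ▸ ht).1).ne'

lemma integral_div_sq_add_const {a b : ℝ} (ha : 0 < a) (hab : a ≤ b) (c d : ℝ) :
    ∫ t in a..b, (c / t ^ 2 + d) = c * (1 / a - 1 / b) + d * (b - a) := by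
  have hderiv : ∀ t ∈ uIcc a b, HasDerivAt (fun t => -c * t⁻¹ + d * t) (c / t ^ 2 + d) t := by
    intro t ht
    have ht0 : t ≠ 0 := (ha.trans_le (uIcc_of_le hab ▸ ht).1).ne'
    refine (((hasDerivAt_inv ht0).const_mul (-c)).add
      ((hasDerivAt_id t).const_mul d)).congr_deriv ?_
    field_simp
  have hb : b ≠ 0 := (ha.trans_le hab).ne'
  rw [integral_eq_sub_of_hasDerivAt hderiv (intervalIntegrable_div_sq_add_const ha hab c d)]
  field_simp
  ring

noncomputable def innerIntegral (n : ℕ) (x : ℝ) : ℝ :=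
  ∫ t in (0 : ℝ)..1, |secondDiff (oddTrapezoid n) x t| / t

lemma innerIntegral_nonneg (n : ℕ) (x : ℝ) : 0 ≤ innerIntegral n x :=
  integral_nonneg zero_le_one fun _ ht => div_nonneg (abs_nonneg _) ht.1

lemma innerIntegral_le {n : ℕ} (hn : 0 < n) {x : ℝ} (hx : 0 ≤ x) :
    innerIntegral n x ≤ 8 * n * x + 20 := by
  have hn' : (0 : ℝ) < n := Nat.cast_pos.2 hn
  have hn1 : (1 : ℝ) ≤ n := Nat.one_le_cast.2 hn
  set a : ℝ := 1 / (2 * n) with ha_def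
  have ha : 0 < a := by positivity
  have ha1 : a ≤ 1 := by rw [ha_def, div_le_one (by positivity)]; linarith
  rw [innerIntegral, ← integral_add_adjacent_intervals
    (intervalIntegrable_abs_secondDiff_oddTrapezoid_div n x le_rfl ha.le)
    (intervalIntegrable_abs_secondDiff_oddTrapezoid_div n x ha.le ha1)]
  have hnear : ∫ t in (0 : ℝ)..a, |secondDiff (oddTrapezoid n) x t| / t ≤ 4 :=
    calc _ ≤ ∫ _ in (0 : ℝ)..a, 8 * (n : ℝ) :=
          integral_mono_on ha.le
            (intervalIntegrable_abs_secondDiff_oddTrapezoid_div n x le_rfl ha.le)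
            intervalIntegrable_const fun t ht => abs_secondDiff_oddTrapezoid_div_le n x ht.1
      _ = 4 := by rw [intervalIntegral.integral_const, smul_eq_mul, ha_def]; field_simp; norm_num
  have hfar : ∫ t in a..1, |secondDiff (oddTrapezoid n) x t| / t ≤ 8 * n * x + 16 :=
    calc _ ≤ ∫ t in a..1, (4 * (x + 1 / n) / t ^ 2 + 8) := by
          refine integral_mono_on ha1
            (intervalIntegrable_abs_secondDiff_oddTrapezoid_div n x ha.le ha1)
            (intervalIntegrable_div_sq_add_const ha ha1 _ _)
            fun t ht => abs_secondDiff_oddTrapezoid_div_le_inv_sq hn hx (ha.trans_le ht.1)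
      _ = 4 * (x + 1 / n) * (2 * n - 1) + 8 * (1 - a) := by
          rw [integral_div_sq_add_const ha ha1, ha_def]; field_simp
      _ ≤ 8 * n * x + 16 := by
          have : 0 ≤ 4 * (x + 1 / n) := by positivity
          have : 0 ≤ a := ha.le
          calc _ ≤ 4 * (x + 1 / n) * (2 * n) + 8 := by nlinarith
            _ = 8 * n * x + 16 := by field_simp; ring
  linarith

lemma integral_mul_one_sub_sq_div_four_pow (m : ℕ) :
    ∫ x in (0 : ℝ)..2, x * (1 - x ^ 2 / 4) ^ m = 2 / ((m : ℝ) + 1) := by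
  have hderiv : ∀ x ∈ uIcc (0 : ℝ) 2,
      HasDerivAt (fun y => -(2 / ((m : ℝ) + 1)) * (1 - y ^ 2 / 4) ^ (m + 1))
        (x * (1 - x ^ 2 / 4) ^ m) x := by
    intro x _
    refine ((((hasDerivAt_pow 2 x).div_const 4).const_sub 1).pow (m + 1)).const_mul
      (-(2 / ((m : ℝ) + 1))) |>.congr_deriv ?_
    push_cast
    field_simp
    ring
  rw [integral_eq_sub_of_hasDerivAt hderiv
    ((by fun_prop : Continuous fun x : ℝ => x * (1 - x ^ 2 / 4) ^ m).intervalIntegrable _ _)]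
  norm_num

lemma one_sub_sq_div_four_pow_nonneg {x : ℝ} (hx : x ∈ Icc (-2) 2) (m : ℕ) :
    0 ≤ (1 - x ^ 2 / 4) ^ m := by
  have : x ^ 2 ≤ 4 := by nlinarith [hx.1, hx.2]
  exact pow_nonneg (by linarith) m

/-- By Bernoulli, `(1 - x²/4)^(n²) ≥ 1 - n²x²/4 ≥ 1/2` on `[0, 1/n]`. -/
lemma inv_le_integral_one_sub_sq_div_four_pow {n : ℕ} (hn : 0 < n) :
    1 / (2 * (n : ℝ)) ≤ ∫ x in (-2 : ℝ)..2, (1 - x ^ 2 / 4) ^ (n ^ 2) := by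
  have hn' : (0 : ℝ) < n := Nat.cast_pos.2 hn
  have hn1 : (1 : ℝ) ≤ n := Nat.one_le_cast.2 hn
  have hinv : 1 / (n : ℝ) ≤ 1 := by rw [div_le_one hn']; exact hn1
  calc 1 / (2 * n) = ∫ _ in (0 : ℝ)..1 / n, (1 / 2 : ℝ) := by
        rw [intervalIntegral.integral_const, smul_eq_mul]; field_simp; ring
    _ ≤ ∫ x in (0 : ℝ)..1 / n, (1 - x ^ 2 / 4) ^ (n ^ 2) := by
        refine integral_mono_on (by positivity) intervalIntegrable_const
          ((by fun_prop : Continuous fun x : ℝ => (1 - x ^ 2 / 4) ^ (n ^ 2)).intervalIntegrable _ _)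
          fun x hx => ?_
        have hnx : n * x ≤ 1 := by rw [← le_div_iff₀' hn']; exact hx.2
        have hbern := one_add_mul_le_pow (a := -(x ^ 2 / 4)) (by nlinarith [hx.1]) (n ^ 2)
        have hsq : (n * x) ^ 2 ≤ 1 := pow_le_one₀ (mul_nonneg hn'.le hx.1) hnx
        rw [← sub_eq_add_neg] at hbern
        push_cast at hbern
        nlinarith
    _ ≤ ∫ x in (-2 : ℝ)..2, (1 - x ^ 2 / 4) ^ (n ^ 2) := by
        refine integral_mono_interval (by norm_num) (by positivity) (by linarith)
          ((ae_restrict_iff' measurableSet_Ioc).2 (ae_of_all _ fun x hx => ?_))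
          ((by fun_prop : Continuous fun x : ℝ => (1 - x ^ 2 / 4) ^ (n ^ 2)).intervalIntegrable _ _)
        exact one_sub_sq_div_four_pow_nonneg (Ioc_subset_Icc_self hx) _

lemma pos_and_le_of_integral_mul_one_sub_sq_div_four_pow_eq_one {n : ℕ} (hn : 0 < n) {c : ℝ}
    (hc : ∫ x in (-2 : ℝ)..2, c * (1 - x ^ 2 / 4) ^ (n ^ 2) = 1) : 0 < c ∧ c ≤ 2 * n := by
  rw [intervalIntegral.integral_const_mul] at hc
  have hS := inv_le_integral_one_sub_sq_div_four_pow hn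
  have hS0 : 0 < ∫ x in (-2 : ℝ)..2, (1 - x ^ 2 / 4) ^ (n ^ 2) :=
    lt_of_lt_of_le (by positivity) hS
  have hc0 : 0 < c := pos_of_mul_pos_left (by rw [hc]; exact one_pos) hS0.le
  refine ⟨hc0, ?_⟩
  have := mul_le_mul_of_nonneg_left hS hc0.le
  have hn' : (0 : ℝ) < n := Nat.cast_pos.2 hn
  rwa [hc, mul_one_div, div_le_one (by positivity)] at this

lemma intervalIntegral_mono_of_nonneg {f g : ℝ → ℝ} {a b : ℝ} (hab : a ≤ b)
    (hf : ∀ x ∈ Icc a b, 0 ≤ f x) (hg : IntervalIntegrable g volume a b)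
    (hfg : ∀ x ∈ Icc a b, f x ≤ g x) : ∫ x in a..b, f x ≤ ∫ x in a..b, g x := by
  rw [integral_of_le hab, integral_of_le hab]
  refine integral_mono_of_nonneg ?_ hg.1 ?_ <;>
    refine (ae_restrict_iff' measurableSet_Ioc).2 (ae_of_all _ fun x hx => ?_)
  exacts [hf x (Ioc_subset_Icc_self hx), hfg x (Ioc_subset_Icc_self hx)]

lemma integral_innerIntegral_mul_nonneg (n : ℕ) {c : ℝ} (hc : 0 ≤ c) :
    0 ≤ ∫ x in (0 : ℝ)..2, innerIntegral n x * (c * (1 - x ^ 2 / 4) ^ (n ^ 2)) :=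
  integral_nonneg zero_le_two fun x hx =>
    mul_nonneg (innerIntegral_nonneg n x)
      (mul_nonneg hc (one_sub_sq_div_four_pow_nonneg ⟨by linarith [hx.1], hx.2⟩ _))

lemma integral_innerIntegral_mul_le {n : ℕ} (hn : 0 < n) {c : ℝ}
    (hc : ∫ x in (-2 : ℝ)..2, c * (1 - x ^ 2 / 4) ^ (n ^ 2) = 1) :
    ∫ x in (0 : ℝ)..2, innerIntegral n x * (c * (1 - x ^ 2 / 4) ^ (n ^ 2)) ≤ 52 := by
  obtain ⟨hc0, hcn⟩ := pos_and_le_of_integral_mul_one_sub_sq_div_four_pow_eq_one hn hc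
  have hn' : (0 : ℝ) < n := Nat.cast_pos.2 hn
  have hweight : ∀ x ∈ Icc (0 : ℝ) 2, 0 ≤ c * (1 - x ^ 2 / 4) ^ (n ^ 2) := fun x hx =>
    mul_nonneg hc0.le (one_sub_sq_div_four_pow_nonneg ⟨by linarith [hx.1], hx.2⟩ _)
  have hmass : ∫ x in (0 : ℝ)..2, c * (1 - x ^ 2 / 4) ^ (n ^ 2) ≤ 1 := by
    refine (integral_mono_interval (by norm_num) zero_le_two le_rfl
      ((ae_restrict_iff' measurableSet_Ioc).2 (ae_of_all _ fun x hx => ?_))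
      ((by fun_prop : Continuous fun x : ℝ => c * (1 - x ^ 2 / 4) ^ (n ^ 2)).intervalIntegrable
        _ _)).trans_eq hc
    exact mul_nonneg hc0.le (one_sub_sq_div_four_pow_nonneg (Ioc_subset_Icc_self hx) _)
  calc _ ≤ ∫ x in (0 : ℝ)..2, (8 * n * x + 20) * (c * (1 - x ^ 2 / 4) ^ (n ^ 2)) := by
        refine intervalIntegral_mono_of_nonneg zero_le_two (fun x hx => ?_)
          ((by fun_prop : Continuous fun x : ℝ =>
            (8 * n * x + 20) * (c * (1 - x ^ 2 / 4) ^ (n ^ 2))).intervalIntegrable _ _)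
          fun x hx => mul_le_mul_of_nonneg_right (innerIntegral_le hn hx.1) (hweight x hx)
        exact mul_nonneg (innerIntegral_nonneg n x) (hweight x hx)
    _ = 8 * n * c * (∫ x in (0 : ℝ)..2, x * (1 - x ^ 2 / 4) ^ (n ^ 2)) +
          20 * ∫ x in (0 : ℝ)..2, c * (1 - x ^ 2 / 4) ^ (n ^ 2) := by
        rw [integral_congr fun x _ => show (8 * n * x + 20) * (c * (1 - x ^ 2 / 4) ^ (n ^ 2)) =
            8 * n * c * (x * (1 - x ^ 2 / 4) ^ (n ^ 2)) + 20 * (c * (1 - x ^ 2 / 4) ^ (n ^ 2))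
            by ring,
          intervalIntegral.integral_add, intervalIntegral.integral_const_mul,
          intervalIntegral.integral_const_mul]
        all_goals exact Continuous.intervalIntegrable (by fun_prop) _ _
    _ ≤ 8 * n * (2 * n) * (2 / (n ^ 2 + 1)) + 20 * 1 := by
        rw [integral_mul_one_sub_sq_div_four_pow, Nat.cast_pow]
        gcongr
    _ = 32 * (n ^ 2 / (n ^ 2 + 1)) + 20 := by ring
    _ ≤ 32 * 1 + 20 := by
        gcongr
        exact div_le_one_of_le₀ (by linarith) (by positivity)
    _ = 52 := by norm_num

theorem stmt8 (c : ℕ → ℝ)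
    (hc : ∀ n : ℕ, 2 ≤ n →
      (∫ x in (-2:ℝ)..2, c n * (1 - x ^ 2 / 4) ^ (n ^ 2)) = 1)
    (f : ℕ → ℝ → ℝ)
    (hf : ∀ n : ℕ, ∀ t : ℝ,
      f n t = max (-1) (min 1 ((n : ℝ) * t)) * max 0 (min 1 ((n : ℝ) * (1 - |t|)))) :
    Tendsto
      (fun n : ℕ =>
        (∫ x in (0:ℝ)..2,
          (∫ t in (0:ℝ)..1, |f n (t + x) + f n (t - x) - 2 * f n t| / t) *
            (c n * (1 - x ^ 2 / 4) ^ (n ^ 2))) / Real.log n)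
      atTop (nhds 0) := by
  obtain rfl : f = oddTrapezoid := funext₂ hf
  have hbound : Tendsto (fun n : ℕ => 52 / log n) atTop (nhds 0) :=
    tendsto_const_nhds.div_atTop (tendsto_log_atTop.comp tendsto_natCast_atTop_atTop)
  refine tendsto_of_tendsto_of_tendsto_of_le_of_le' tendsto_const_nhds hbound ?_ ?_ <;>
    filter_upwards [eventually_ge_atTop 2] with n hn
  · have hc0 := (pos_and_le_of_integral_mul_one_sub_sq_div_four_pow_eq_one (by omega) (hc n hn)).1
    exact div_nonneg (integral_innerIntegral_mul_nonneg n hc0.le) (log_natCast_nonneg n)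
  · exact div_le_div_of_nonneg_right (integral_innerIntegral_mul_le (by omega) (hc n hn))
      (log_natCast_nonneg n)
end

section
/- (Vinogradov's sublevel set lemma) Let h(t) = b₀ + b₁t + ⋯ + b_n tⁿ be a real polynomial of degree at most n, not identically zero, and let α > 0. Then the Lebesgue measure of the set E_α = {t ∈ [1,2] : |h(t)| ≤ α} satisfies |E_α| ≤ c (α / max_{0≤k≤n} |b_k|)^{1/n} for an absolute constant c > 0 (independent of n, h, α). -/
open Real MeasureTheory Polynomial

/-!
The distribution function `F t = |E_α ∩ (-∞, t]|` is `1`-Lipschitz, and since `E_α` is compact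
every value in `[0, |E_α|]` is taken by `F` at a point of `E_α`. Taking `x_j ∈ E_α` with
`F x_j = j |E_α| / n` gives nodes with `|x_i - x_j| ≥ |i - j| |E_α| / n`.
Lagrange interpolation at these nodes expresses each coefficient `b_k` through the values
`h(x_j)`, `|h(x_j)| ≤ α`. The coefficients of `∏_{i ≠ j} (X - x_i)` are at most `3ⁿ`
(binomial theorem, `|x_i| ≤ 2`) and `∏_{i ≠ j} |x_j - x_i| ≥ (|E_α|/n)ⁿ j! (n-j)!`, so
`|b_k| ≤ α 3ⁿ (n/|E_α|)ⁿ 2ⁿ / n! ≤ α (6e / |E_α|)ⁿ` by `nⁿ ≤ eⁿ n!`. Hence `c = 6e` works.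
-/

noncomputable def cumulativeMeasure (E : Set ℝ) (x : ℝ) : ℝ := (volume (E ∩ Set.Iic x)).toReal

namespace cumulativeMeasure

open Set

variable {E : Set ℝ}

lemma le_add_sub (hE : volume E ≠ ⊤) {a b : ℝ} (hab : a ≤ b) :
    cumulativeMeasure E b ≤ cumulativeMeasure E a + (b - a) := by
  have hsub : E ∩ Iic b ⊆ (E ∩ Iic a) ∪ Ioc a b := fun t ⟨htE, htb⟩ =>
    (le_or_gt t a).imp (fun hta => ⟨htE, hta⟩) (fun hta => ⟨hta, htb⟩)
  have hfin : volume (E ∩ Iic a) ≠ ⊤ := measure_ne_top_of_subset inter_subset_left hE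
  calc cumulativeMeasure E b ≤ (volume (E ∩ Iic a) + volume (Ioc a b)).toReal :=
        ENNReal.toReal_mono (by simp [hfin]) ((measure_mono hsub).trans (measure_union_le _ _))
    _ = cumulativeMeasure E a + (b - a) := by
        rw [ENNReal.toReal_add hfin (by simp), Real.volume_Ioc, ENNReal.toReal_ofReal (by linarith)]
        rfl

lemma mono (hE : volume E ≠ ⊤) : Monotone (cumulativeMeasure E) := fun _ _ hab =>
  ENNReal.toReal_mono (measure_ne_top_of_subset inter_subset_left hE)
    (measure_mono (inter_subset_inter_right _ (Iic_subset_Iic.2 hab)))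

lemma lipschitzWith_one (hE : volume E ≠ ⊤) : LipschitzWith 1 (cumulativeMeasure E) := by
  refine LipschitzWith.of_dist_le_mul fun a b => ?_
  wlog hab : b ≤ a generalizing a b
  · rw [dist_comm, dist_comm a]; exact this b a (le_of_not_ge hab)
  rw [Real.dist_eq, Real.dist_eq, abs_of_nonneg (sub_nonneg.2 (mono hE hab)),
    abs_of_nonneg (sub_nonneg.2 hab), NNReal.coe_one, one_mul]
  linarith [le_add_sub hE hab]

lemma eq_of_mem_upperBounds {x : ℝ} (hx : x ∈ upperBounds E) :
    cumulativeMeasure E x = (volume E).toReal := by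
  rw [cumulativeMeasure, inter_eq_self_of_subset_left fun _ h => mem_Iic.2 (hx h)]

lemma exists_mem_le_of_pos (hE : IsCompact E) {u : ℝ} (hu : 0 < cumulativeMeasure E u) :
    ∃ z ∈ E, z ≤ u ∧ cumulativeMeasure E u ≤ cumulativeMeasure E z := by
  have hne : (E ∩ Iic u).Nonempty := by
    by_contra h
    simp [cumulativeMeasure, not_nonempty_iff_eq_empty.1 h] at hu
  have hbdd : BddAbove (E ∩ Iic u) := hE.bddAbove.mono inter_subset_left
  obtain ⟨hzE, hzu⟩ := (hE.isClosed.inter isClosed_Iic).csSup_mem hne hbdd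
  refine ⟨_, hzE, hzu, ENNReal.toReal_mono ?_ (measure_mono fun t ht => ⟨ht.1, le_csSup hbdd ht⟩)⟩
  exact measure_ne_top_of_subset inter_subset_left (hE.measure_lt_top (μ := volume)).ne

lemma exists_mem_eq (hE : IsCompact E) (hne : E.Nonempty) {m : ℝ} (hm₀ : 0 ≤ m)
    (hm : m ≤ (volume E).toReal) : ∃ x ∈ E, cumulativeMeasure E x = m := by
  have hfin := (hE.measure_lt_top (μ := volume)).ne
  set T := E ∩ cumulativeMeasure E ⁻¹' Ici m
  have hT : IsCompact T :=
    hE.inter_right (isClosed_Ici.preimage (lipschitzWith_one hfin).continuous)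
  have hTne : T.Nonempty := ⟨sSup E, hE.sSup_mem hne, by
    rw [mem_preimage, eq_of_mem_upperBounds fun _ hx => le_csSup hE.bddAbove hx]; exact hm⟩
  obtain ⟨hxE, hxm⟩ := hT.sInf_mem hTne
  refine ⟨sInf T, hxE, le_antisymm (not_lt.1 fun hlt => ?_) hxm⟩
  -- `F > m` slightly left of `sInf T`, hence at a point of `E` there: this contradicts minimality.
  set ε := cumulativeMeasure E (sInf T) - m
  have hu : m < cumulativeMeasure E (sInf T - ε / 2) := by
    linarith [le_add_sub hfin (show sInf T - ε / 2 ≤ sInf T by linarith)]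
  obtain ⟨z, hzE, hzu, hz⟩ := exists_mem_le_of_pos hE (hm₀.trans_lt hu)
  linarith [csInf_le hT.bddBelow (show z ∈ T from ⟨hzE, hu.le.trans hz⟩)]

end cumulativeMeasure

lemma exists_spaced_points {E : Set ℝ} (hE : IsCompact E) (hne : E.Nonempty) (n : ℕ) :
    ∃ x : ℕ → ℝ, (∀ j ≤ n, x j ∈ E) ∧
      ∀ i ≤ n, ∀ j ≤ n, (volume E).toReal / n * |(i : ℝ) - j| ≤ |x i - x j| := by
  have hlevel : ∀ j ≤ n, ∃ x ∈ E, cumulativeMeasure E x = (volume E).toReal / n * j := by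
    intro j hj
    refine cumulativeMeasure.exists_mem_eq hE hne (by positivity) ?_
    rcases n.eq_zero_or_pos with rfl | hn
    · simp
    · rw [div_mul_eq_mul_div, mul_div_assoc]
      exact mul_le_of_le_one_right ENNReal.toReal_nonneg
        (div_le_one_of_le₀ (by exact_mod_cast hj) n.cast_nonneg)
  choose! x hxE hx using hlevel
  refine ⟨x, hxE, fun i hi j hj => ?_⟩
  have := (cumulativeMeasure.lipschitzWith_one (hE.measure_lt_top (μ := volume)).ne).dist_le_mul
    (x i) (x j)
  rwa [Real.dist_eq, Real.dist_eq, hx i hi, hx j hj, NNReal.coe_one, one_mul, ← mul_sub,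
    abs_mul, abs_of_nonneg (by positivity : 0 ≤ (volume E).toReal / n)] at this

open Finset Nat

lemma abs_esymm_le {ι : Type*} (t : Finset ι) (v : ι → ℝ) {R : ℝ} (hv : ∀ i ∈ t, |v i| ≤ R)
    (m : ℕ) : |(t.val.map v).esymm m| ≤ (#t).choose m * R ^ m := by
  rw [Finset.esymm_map_val]
  calc |∑ u ∈ t.powersetCard m, ∏ i ∈ u, v i| ≤ ∑ u ∈ t.powersetCard m, |∏ i ∈ u, v i| :=
        abs_sum_le_sum_abs _ _
    _ ≤ ∑ u ∈ t.powersetCard m, R ^ m := sum_le_sum fun u hu => by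
        obtain ⟨hut, rfl⟩ := mem_powersetCard.1 hu
        rw [abs_prod, ← prod_const]
        exact prod_le_prod (fun _ _ => abs_nonneg _) fun i hi => hv i (hut hi)
    _ = (#t).choose m * R ^ m := by rw [sum_const, card_powersetCard, nsmul_eq_mul]

lemma abs_coeff_prod_X_sub_C_le {ι : Type*} (t : Finset ι) (v : ι → ℝ) {R : ℝ} (hR : 0 ≤ R)
    (hv : ∀ i ∈ t, |v i| ≤ R) {k : ℕ} (hk : k ≤ #t) :
    |(∏ i ∈ t, (X - C (v i))).coeff k| ≤ (1 + R) ^ #t := by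
  have hprod : ∏ i ∈ t, (X - C (v i)) = ((t.val.map v).map fun a => X - C a).prod := by
    rw [Multiset.map_map]; rfl
  rw [hprod, Multiset.prod_X_sub_C_coeff _ (by simpa using hk), Multiset.card_map, card_val,
    abs_mul, abs_pow, abs_neg, abs_one, one_pow, one_mul, add_comm, add_pow]
  calc _ ≤ (#t).choose (#t - k) * R ^ (#t - k) := abs_esymm_le t v hv _
    _ ≤ ∑ m ∈ range (#t + 1), R ^ m * 1 ^ (#t - m) * (#t).choose m := by
        have := single_le_sum (f := fun m => R ^ m * 1 ^ (#t - m) * ((#t).choose m : ℝ))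
          (fun _ _ => by positivity) (mem_range.2 (by omega : #t - k < #t + 1))
        simpa [mul_comm] using this

lemma Lagrange.basis_eq_C_mul_prod {F ι : Type*} [Field F] [DecidableEq ι] (s : Finset ι)
    (v : ι → F) (j : ι) :
    Lagrange.basis s v j =
      C (∏ i ∈ s.erase j, (v j - v i))⁻¹ * ∏ i ∈ s.erase j, (X - C (v i)) := by
  simp_rw [Lagrange.basis, Lagrange.basisDivisor]
  rw [prod_mul_distrib, ← map_prod, prod_inv_distrib]

lemma abs_coeff_basis_le {ι : Type*} [DecidableEq ι] (s : Finset ι) (v : ι → ℝ) {R : ℝ}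
    (hR : 0 ≤ R) (hv : ∀ i ∈ s, |v i| ≤ R) {j : ι} (hj : j ∈ s) {k : ℕ} (hk : k < #s) :
    |(Lagrange.basis s v j).coeff k| ≤ (1 + R) ^ (#s - 1) / ∏ i ∈ s.erase j, |v j - v i| := by
  rw [Lagrange.basis_eq_C_mul_prod, coeff_C_mul, abs_mul, abs_inv, abs_prod, inv_mul_eq_div,
    ← card_erase_of_mem hj]
  gcongr
  exact abs_coeff_prod_X_sub_C_le _ _ hR (fun i hi => hv i (mem_of_mem_erase hi))
    (by rw [card_erase_of_mem hj]; omega)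

lemma abs_coeff_le_sum_of_degree_lt {ι : Type*} [DecidableEq ι] {s : Finset ι} {v : ι → ℝ}
    (hvs : Set.InjOn v s) {f : ℝ[X]} (hf : f.degree < #s) (k : ℕ) :
    |f.coeff k| ≤ ∑ j ∈ s, |f.eval (v j)| * |(Lagrange.basis s v j).coeff k| := by
  conv_lhs => rw [Lagrange.eq_interpolate hvs hf, Lagrange.interpolate_apply, finsetSum_coeff]
  refine (abs_sum_le_sum_abs _ _).trans_eq (sum_congr rfl fun j _ => ?_)
  rw [coeff_C_mul, abs_mul]

lemma prod_erase_abs_natCast_sub {n j : ℕ} (hj : j ≤ n) :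
    ∏ i ∈ (range (n + 1)).erase j, |(j : ℝ) - i| = j ! * (n - j)! := by
  have hsplit : (range (n + 1)).erase j = range j ∪ Ico (j + 1) (n + 1) := by
    ext i; simp only [mem_erase, mem_range, mem_union, mem_Ico]; omega
  rw [hsplit, prod_union (disjoint_left.2 fun i hi hi' => by simp at hi hi'; omega)]
  congr 1
  · rw [← prod_range_add_one_eq_factorial, ← prod_range_reflect, cast_prod]
    refine prod_congr rfl fun i hi => ?_
    rw [mem_range] at hi
    rw [← cast_sub (by omega : j - 1 - i ≤ j), abs_of_nonneg (cast_nonneg _)]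
    congr 1; omega
  · rw [prod_Ico_eq_prod_range, ← prod_range_add_one_eq_factorial, cast_prod,
      show n + 1 - (j + 1) = n - j by omega]
    refine prod_congr rfl fun i _ => ?_
    rw [abs_sub_comm, abs_of_pos (by push_cast; linarith)]
    push_cast; ring

lemma sum_range_inv_factorial_mul_factorial (n : ℕ) :
    ∑ j ∈ range (n + 1), ((j ! * (n - j)! : ℝ))⁻¹ = 2 ^ n / n ! := by
  rw [show (2 : ℝ) ^ n = (2 ^ n : ℕ) by push_cast; rfl, ← Nat.sum_range_choose, cast_sum, sum_div]
  refine sum_congr rfl fun j hj => ?_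
  rw [cast_choose ℝ (by simp at hj; omega), div_div_cancel_left' (by positivity)]

theorem abs_coeff_le_of_spaced_nodes {n : ℕ} {x : ℕ → ℝ} {R δ α : ℝ} (hR : 0 ≤ R) (hδ : 0 < δ)
    (hxR : ∀ j ≤ n, |x j| ≤ R) (hsp : ∀ i ≤ n, ∀ j ≤ n, δ * |(i : ℝ) - j| ≤ |x i - x j|)
    {h : ℝ[X]} (hdeg : h.natDegree ≤ n) (hα : ∀ j ≤ n, |h.eval (x j)| ≤ α) {k : ℕ}
    (hk : k ≤ n) : |h.coeff k| ≤ α * (2 * (1 + R)) ^ n / (δ ^ n * n !) := by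
  have hmem {j : ℕ} : j ∈ range (n + 1) ↔ j ≤ n := mem_range_succ_iff
  have hinj : Set.InjOn x (range (n + 1)) := fun i hi j hj hij => by
    have := hsp i (hmem.1 hi) j (hmem.1 hj)
    rw [hij, sub_self, abs_zero, mul_nonpos_iff_pos_imp_nonpos] at this
    exact_mod_cast sub_eq_zero.1 (abs_nonpos_iff.1 (this.1 hδ))
  have hnodes (j : ℕ) (hj : j ≤ n) :
      δ ^ n * (j ! * (n - j)!) ≤ ∏ i ∈ (range (n + 1)).erase j, |x j - x i| := by
    calc δ ^ n * (j ! * (n - j)!) = ∏ i ∈ (range (n + 1)).erase j, δ * |(j : ℝ) - i| := by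
          rw [prod_mul_distrib, prod_const, card_erase_of_mem (hmem.2 hj), card_range,
            add_tsub_cancel_right, prod_erase_abs_natCast_sub hj]
      _ ≤ _ := prod_le_prod (fun _ _ => by positivity) fun i hi =>
          hsp j hj i (hmem.1 (mem_of_mem_erase hi))
  have hbasis (j : ℕ) (hj : j ≤ n) : |(Lagrange.basis (range (n + 1)) x j).coeff k| ≤
      (1 + R) ^ n / δ ^ n * (j ! * (n - j)! : ℝ)⁻¹ := by
    refine (abs_coeff_basis_le _ _ hR (fun i hi => hxR i (hmem.1 hi)) (hmem.2 hj)
      (by simp; omega)).trans ?_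
    rw [card_range, add_tsub_cancel_right, ← div_eq_mul_inv, div_div]
    gcongr
    exact hnodes j hj
  calc |h.coeff k| ≤ ∑ j ∈ range (n + 1),
        |h.eval (x j)| * |(Lagrange.basis (range (n + 1)) x j).coeff k| :=
        abs_coeff_le_sum_of_degree_lt hinj
          ((degree_le_of_natDegree_le hdeg).trans_lt (by simp; exact_mod_cast n.lt_succ_self)) k
    _ ≤ ∑ j ∈ range (n + 1), α * ((1 + R) ^ n / δ ^ n * (j ! * (n - j)! : ℝ)⁻¹) :=
        sum_le_sum fun j hj => mul_le_mul (hα j (hmem.1 hj)) (hbasis j (hmem.1 hj))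
          (abs_nonneg _) ((abs_nonneg _).trans (hα 0 n.zero_le))
    _ = α * (2 * (1 + R)) ^ n / (δ ^ n * n !) := by
        rw [← mul_sum, ← mul_sum, sum_range_inv_factorial_mul_factorial, mul_pow]
        field_simp

lemma div_exp_one_pow_le_div_pow_mul_factorial {d : ℝ} (hd : 0 ≤ d) (n : ℕ) :
    (d / exp 1) ^ n ≤ (d / n) ^ n * n ! := by
  rcases n.eq_zero_or_pos with rfl | hn
  · simp
  have := pow_div_factorial_le_exp (n : ℝ) n.cast_nonneg n
  rw [← exp_one_pow, div_le_iff₀ (by positivity)] at this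
  rw [div_pow, div_pow, div_mul_eq_mul_div, div_le_div_iff₀ (by positivity) (by positivity)]
  calc d ^ n * n ^ n ≤ d ^ n * (exp 1 ^ n * n !) := by gcongr
    _ = _ := by ring

lemma le_mul_rpow_one_div_of_pow_le {d c y : ℝ} (hd : 0 ≤ d) (hc : 0 ≤ c) (hy : 0 ≤ y) {n : ℕ}
    (hn : n ≠ 0) (h : d ^ n ≤ c ^ n * y) : d ≤ c * y ^ ((1 : ℝ) / n) :=
  calc d = (d ^ n) ^ (n⁻¹ : ℝ) := (pow_rpow_inv_natCast hd hn).symm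
    _ ≤ (c ^ n * y) ^ (n⁻¹ : ℝ) := by gcongr
    _ = c * y ^ ((1 : ℝ) / n) := by
        rw [mul_rpow (by positivity) hy, pow_rpow_inv_natCast hc hn, one_div]

theorem stmt12 :
    ∃ c : ℝ, 0 < c ∧
      ∀ n : ℕ, 1 ≤ n → ∀ h : Polynomial ℝ, h ≠ 0 → h.natDegree ≤ n →
        ∀ α : ℝ, 0 < α →
          (volume {t : ℝ | t ∈ Set.Icc (1:ℝ) 2 ∧ |h.eval t| ≤ α}).toReal ≤
            c * (α / (Finset.range (n + 1)).sup' (by simp) (fun k => |h.coeff k|)) ^ ((1:ℝ)/n) := by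
  refine ⟨6 * exp 1, by positivity, fun n hn h hh hdeg α hα => ?_⟩
  set B := (range (n + 1)).sup' (by simp) fun k => |h.coeff k|
  set E := {t : ℝ | t ∈ Set.Icc (1:ℝ) 2 ∧ |h.eval t| ≤ α}
  obtain ⟨k, hk, hBk⟩ := exists_mem_eq_sup' (s := range (n + 1)) (by simp) fun k => |h.coeff k|
  have hB : 0 < B := (abs_pos.2 (leadingCoeff_ne_zero.2 hh)).trans_le
    (le_sup' (fun k => |h.coeff k|) (mem_range_succ_iff.2 hdeg))
  have hE : IsCompact E :=
    isCompact_Icc.inter_right (isClosed_le (continuous_abs.comp h.continuous) continuous_const)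
  set d := (volume E).toReal
  rcases (show 0 ≤ d from ENNReal.toReal_nonneg).eq_or_lt with hd | hd
  · rw [← hd]; positivity
  obtain ⟨x, hxE, hsp⟩ := exists_spaced_points hE
    (nonempty_of_measure_ne_zero (ENNReal.toReal_pos_iff.1 hd).1.ne') n
  have hcoeff := abs_coeff_le_of_spaced_nodes (R := 2) zero_le_two (by positivity) (fun j hj =>
    abs_le.2 ⟨by linarith [(hxE j hj).1.1], by linarith [(hxE j hj).1.2]⟩) hsp hdeg
    (fun j hj => (hxE j hj).2) (mem_range_succ_iff.1 hk)
  refine le_mul_rpow_one_div_of_pow_le hd.le (by positivity) (by positivity) (by omega) ?_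
  have hBd : B ≤ α * (6 * exp 1) ^ n / d ^ n :=
    calc B = |h.coeff k| := hBk
      _ ≤ α * (2 * (1 + 2)) ^ n / ((d / n) ^ n * n !) := hcoeff
      _ ≤ α * 6 ^ n / (d / exp 1) ^ n := by
          norm_num
          gcongr
          exact div_exp_one_pow_le_div_pow_mul_factorial hd.le n
      _ = α * (6 * exp 1) ^ n / d ^ n := by
          rw [div_pow, mul_pow]
          field_simp
  rw [mul_div_assoc', le_div_iff₀ hB]
  rw [le_div_iff₀ (by positivity)] at hBd
  linarith
end
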